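/- arXiv:1503.01603 — 4 statements merged into one kernel-verified Lean document; each statement's English description precedes it below -/
import Mathlib

section
/- Corollary 1 (transport formula for the average causal effect with S-admissible pretreatment covariates): Suppose (i) for every x, y, z, s with μ_x({Z = z} ∩ {S = s}) > 0, μ_x({Y = y} | {Z = z} ∩ {S = s}) = μ_x({Y = y} | {Z = z}) (S-admissibility of Z), and (ii) Z is a pretreatment covariate in the target population, in the sense that there is a probability measure ν on 𝒵 (the target observational distribution of Z) with μ_x({Z = z} | {S = s*}) = ν({z}) for all x and z. Then for every x and y, μ_x({Y = y} | {S = s*}) = Σ_{z : 𝒵} μ_x({Y = y} | {Z = z}) · ν({z}). -/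
open MeasureTheory

/-- Conditional probability: `μ(A | B) = μ(A ∩ B) / μ(B)`. -/
noncomputable def pcond {Ω : Type*} [MeasurableSpace Ω] (μ : Measure Ω) (A B : Set Ω) :
    ENNReal := μ (A ∩ B) / μ B

/-- Corollary 1: if `Z` is S-admissible and is a pretreatment covariate whose
target-population distribution is `ν`, then the average causal effect in the target
population is given by the transport formula
`P*(y | do(x)) = ∑ z, P(y | do(x), z) ν(z)`. -/
theorem average_effect_transport_formula
    {𝒳 𝒴 𝒵 𝒮 : Type*}
    [Fintype 𝒳] [Fintype 𝒴] [Fintype 𝒵] [Fintype 𝒮]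
    [Nonempty 𝒳] [Nonempty 𝒴] [Nonempty 𝒵] [Nonempty 𝒮]
    [MeasurableSpace 𝒴] [DiscreteMeasurableSpace 𝒴]
    [MeasurableSpace 𝒵] [DiscreteMeasurableSpace 𝒵]
    [MeasurableSpace 𝒮] [DiscreteMeasurableSpace 𝒮]
    (μ : 𝒳 → Measure (𝒴 × 𝒵 × 𝒮))
    (hprob : ∀ x, IsProbabilityMeasure (μ x))
    (ν : Measure 𝒵) (hν : IsProbabilityMeasure ν)
    (s' : 𝒮)
    -- positive probability of all conditioning events appearing in the statement
    (hposS : ∀ x, 0 < μ x {p | p.2.2 = s'})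
    (hposZ : ∀ x (z : 𝒵), 0 < μ x {p | p.2.1 = z})
    -- (i) S-admissibility of Z : (Y ⫫ S | Z) under every μ x
    (hadm : ∀ x y z s, 0 < μ x ({p | p.2.1 = z} ∩ {p | p.2.2 = s}) →
      pcond (μ x) {p | p.1 = y} ({p | p.2.1 = z} ∩ {p | p.2.2 = s})
        = pcond (μ x) {p | p.1 = y} {p | p.2.1 = z})
    -- (ii) Z is pretreatment in the target population, with distribution ν
    (hpre : ∀ x z, pcond (μ x) {p | p.2.1 = z} {p | p.2.2 = s'} = ν {z}) :
    ∀ x y,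
      pcond (μ x) {p | p.1 = y} {p | p.2.2 = s'}
        = ∑ z : 𝒵, pcond (μ x) {p | p.1 = y} {p | p.2.1 = z} * ν {z} := by
  intro x y
  haveI := hprob x
  have hSne : μ x {p | p.2.2 = s'} ≠ 0 := (hposS x).ne'
  -- every set in a finite product of discrete spaces is measurable
  have hmeas : ∀ A : Set (𝒴 × 𝒵 × 𝒮), MeasurableSet A := fun A =>
    MeasurableSet.of_discrete
  -- decomposition over the value of Z
  have hdecomp : ∀ A : Set (𝒴 × 𝒵 × 𝒮),
      μ x A = ∑ z : 𝒵, μ x (A ∩ {p | p.2.1 = z}) := by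
    intro A
    have hA : A = ⋃ z : 𝒵, A ∩ {p | p.2.1 = z} := by
      ext p; simp
    calc μ x A = μ x (⋃ z : 𝒵, A ∩ {p | p.2.1 = z}) := by rw [← hA]
      _ = ∑' z : 𝒵, μ x (A ∩ {p | p.2.1 = z}) := by
          refine measure_iUnion ?_ (fun z => hmeas _)
          intro z1 z2 hne
          refine Set.disjoint_left.2 ?_
          rintro p ⟨-, h1⟩ ⟨-, h2⟩
          exact hne (h1 ▸ h2 ▸ rfl)
      _ = ∑ z : 𝒵, μ x (A ∩ {p | p.2.1 = z}) := tsum_fintype _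
  -- pointwise identity for each z
  have hterm : ∀ z : 𝒵,
      μ x ({p | p.1 = y} ∩ {p | p.2.2 = s'} ∩ {p | p.2.1 = z}) / μ x {p | p.2.2 = s'}
        = pcond (μ x) {p | p.1 = y} {p | p.2.1 = z} * ν {z} := by
    intro z
    have hsets : {p : 𝒴 × 𝒵 × 𝒮 | p.1 = y} ∩ {p | p.2.2 = s'} ∩ {p | p.2.1 = z}
        = {p | p.1 = y} ∩ ({p | p.2.1 = z} ∩ {p | p.2.2 = s'}) := by
      ext p
      simp only [Set.mem_inter_iff, Set.mem_setOf_eq]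
      tauto
    rw [hsets]
    by_cases hzero : μ x ({p | p.2.1 = z} ∩ {p | p.2.2 = s'}) = 0
    · have hnum : μ x ({p : 𝒴 × 𝒵 × 𝒮 | p.1 = y} ∩ ({p | p.2.1 = z} ∩ {p | p.2.2 = s'})) = 0 :=
        measure_mono_null Set.inter_subset_right hzero
      have hν0 : ν {z} = 0 := by
        rw [← hpre x z, pcond, hzero, ENNReal.zero_div]
      rw [hnum, hν0, ENNReal.zero_div, mul_zero]
    · have hpos : 0 < μ x ({p : 𝒴 × 𝒵 × 𝒮 | p.2.1 = z} ∩ {p | p.2.2 = s'}) :=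
        pos_iff_ne_zero.2 hzero
      have h1 := hadm x y z s' hpos
      rw [← hpre x z, ← h1, pcond, pcond]
      have hb : μ x ({p : 𝒴 × 𝒵 × 𝒮 | p.2.1 = z} ∩ {p | p.2.2 = s'}) ≠ 0 := hzero
      have hb' : μ x ({p : 𝒴 × 𝒵 × 𝒮 | p.2.1 = z} ∩ {p | p.2.2 = s'}) ≠ ⊤ := measure_ne_top _ _
      rw [div_eq_mul_inv, div_eq_mul_inv, div_eq_mul_inv, mul_assoc,
        ← mul_assoc (μ x ({p | p.2.1 = z} ∩ {p | p.2.2 = s'}))⁻¹,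
        ENNReal.inv_mul_cancel hb hb', one_mul]
  calc pcond (μ x) {p | p.1 = y} {p | p.2.2 = s'}
      = (∑ z : 𝒵, μ x ({p | p.1 = y} ∩ {p | p.2.2 = s'} ∩ {p | p.2.1 = z}))
          / μ x {p | p.2.2 = s'} := by
        rw [pcond, hdecomp]
    _ = ∑ z : 𝒵, μ x ({p | p.1 = y} ∩ {p | p.2.2 = s'} ∩ {p | p.2.1 = z})
          / μ x {p | p.2.2 = s'} := by
        simp only [div_eq_mul_inv]; exact Finset.sum_mul _ _ _
    _ = ∑ z : 𝒵, pcond (μ x) {p | p.1 = y} {p | p.2.1 = z} * ν {z} :=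
        Finset.sum_congr rfl (fun z _ => hterm z)
end

section
/- Theorem 2, condition 2 (transport via an S-admissible, possibly treatment-affected, covariate Z): Suppose that for every x, y, z, s with μ_x({Z = z} ∩ {S = s}) > 0 one has μ_x({Y = y} | {Z = z} ∩ {S = s}) = μ_x({Y = y} | {Z = z}) (S-admissibility of Z). Then for every x and y, μ_x({Y = y} | {S = s*}) = Σ_{z : 𝒵} μ_x({Y = y} | {Z = z}) · μ_x({Z = z} | {S = s*}); that is, the target-population average causal effect is expressible through the source z-specific effects reweighted by the target-population post-intervention distribution of Z. -/
open MeasureTheory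

/-- Theorem 2, condition 2: if `Z` (possibly affected by the treatment) is
S-admissible, then
`P*(y | do(x)) = ∑ z, P(y | do(x), z) · P*(z | do(x))`. -/
theorem transport_via_S_admissible_covariate
    {𝒳 𝒴 𝒵 𝒮 : Type*}
    [Fintype 𝒳] [Fintype 𝒴] [Fintype 𝒵] [Fintype 𝒮]
    [Nonempty 𝒳] [Nonempty 𝒴] [Nonempty 𝒵] [Nonempty 𝒮]
    [MeasurableSpace 𝒴] [DiscreteMeasurableSpace 𝒴]
    [MeasurableSpace 𝒵] [DiscreteMeasurableSpace 𝒵]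
    [MeasurableSpace 𝒮] [DiscreteMeasurableSpace 𝒮]
    (μ : 𝒳 → Measure (𝒴 × 𝒵 × 𝒮))
    (hprob : ∀ x, IsProbabilityMeasure (μ x))
    (s' : 𝒮)
    -- positive probability of all conditioning events appearing in the statement
    (hposS : ∀ x, 0 < μ x {p | p.2.2 = s'})
    (hposZ : ∀ x (z : 𝒵), 0 < μ x {p | p.2.1 = z})
    -- S-admissibility of Z : (Y ⫫ S | Z) under every μ x
    (hadm : ∀ x y z s, 0 < μ x ({p | p.2.1 = z} ∩ {p | p.2.2 = s}) →
      pcond (μ x) {p | p.1 = y} ({p | p.2.1 = z} ∩ {p | p.2.2 = s})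
        = pcond (μ x) {p | p.1 = y} {p | p.2.1 = z}) :
    ∀ x y,
      pcond (μ x) {p | p.1 = y} {p | p.2.2 = s'}
        = ∑ z : 𝒵, pcond (μ x) {p | p.1 = y} {p | p.2.1 = z}
            * pcond (μ x) {p | p.2.1 = z} {p | p.2.2 = s'} := by
  intro x y
  set ν := μ x with hν
  haveI := hprob x
  have hS0 : ν {p | p.2.2 = s'} ≠ 0 := (hposS x).ne'
  have key : ∀ z : 𝒵,
      ν ({p | p.1 = y} ∩ ({p | p.2.1 = z} ∩ {p | p.2.2 = s'}))
        = pcond ν {p | p.1 = y} {p | p.2.1 = z}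
            * ν ({p | p.2.1 = z} ∩ {p | p.2.2 = s'}) := by
    intro z
    rcases eq_or_ne (ν ({p | p.2.1 = z} ∩ {p | p.2.2 = s'})) 0 with h0 | h0
    · rw [h0, mul_zero]
      exact measure_mono_null Set.inter_subset_right h0
    · have hpos : 0 < ν ({p | p.2.1 = z} ∩ {p | p.2.2 = s'}) :=
        pos_iff_ne_zero.mpr h0
      have hadm' := hadm x y z s' hpos
      simp only [pcond] at hadm'
      calc ν ({p | p.1 = y} ∩ ({p | p.2.1 = z} ∩ {p | p.2.2 = s'}))
          = ν ({p | p.1 = y} ∩ ({p | p.2.1 = z} ∩ {p | p.2.2 = s'}))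
              / ν ({p | p.2.1 = z} ∩ {p | p.2.2 = s'})
              * ν ({p | p.2.1 = z} ∩ {p | p.2.2 = s'}) :=
            (ENNReal.div_mul_cancel h0 (measure_ne_top _ _)).symm
        _ = _ := by rw [hadm']; rfl
  have hmeas : ∀ z : 𝒵, MeasurableSet
      ({p : 𝒴 × 𝒵 × 𝒮 | p.1 = y} ∩ ({p | p.2.1 = z} ∩ {p | p.2.2 = s'})) := by
    intro z
    exact (measurable_fst (measurableSet_singleton y)).inter
      (((measurable_fst.comp measurable_snd) (measurableSet_singleton z)).inter
        ((measurable_snd.comp measurable_snd) (measurableSet_singleton s')))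
  have hsplit : ν ({p | p.1 = y} ∩ {p | p.2.2 = s'})
      = ∑ z : 𝒵, ν ({p | p.1 = y} ∩ ({p | p.2.1 = z} ∩ {p | p.2.2 = s'})) := by
    have hU : ({p : 𝒴 × 𝒵 × 𝒮 | p.1 = y} ∩ {p | p.2.2 = s'})
        = ⋃ z : 𝒵, {p | p.1 = y} ∩ ({p | p.2.1 = z} ∩ {p | p.2.2 = s'}) := by
      ext p
      simp only [Set.mem_inter_iff, Set.mem_iUnion, Set.mem_setOf_eq]
      exact ⟨fun ⟨h1, h2⟩ => ⟨p.2.1, h1, rfl, h2⟩, fun ⟨z, h1, _, h2⟩ => ⟨h1, h2⟩⟩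
    have hdisj : Pairwise (Function.onFun Disjoint
        fun z : 𝒵 => {p : 𝒴 × 𝒵 × 𝒮 | p.1 = y} ∩ ({p | p.2.1 = z} ∩ {p | p.2.2 = s'})) := by
      intro i j hij
      rw [Function.onFun, Set.disjoint_left]
      rintro p ⟨_, hz, _⟩ ⟨_, hz', _⟩
      exact hij (hz.symm.trans hz')
    rw [hU, measure_iUnion hdisj hmeas, tsum_fintype]
  simp only [pcond]
  rw [hsplit]
  simp only [key]
  rw [div_eq_mul_inv, Finset.sum_mul]
  refine Finset.sum_congr rfl fun z _ => ?_
  rw [mul_assoc, ← div_eq_mul_inv]; rfl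
end

section
/- Transport formula for the surrogate-endpoint model of Figure 2(c) (equation 35): Suppose (i) for every x, y, z, s with μ_x({Z = z} ∩ {S = s}) > 0, μ_x({Y = y} | {Z = z} ∩ {S = s}) = μ_x({Y = y} | {Z = z}) (S-admissibility of Z), and (ii) there is a probability measure ν on 𝒳 × 𝒵 (the target observational distribution of (X, Z)) such that μ_x({Z = z} | {S = s*}) = ν({Z = z} | {X = x}) for all x, z (trivial transportability of P*(z | do(x)), valid because X and Z are unconfounded so that P*(z | do(x)) = P*(z | x)). Then for every x and y, μ_x({Y = y} | {S = s*}) = Σ_{z : 𝒵} μ_x({Y = y} | {Z = z}) · ν({Z = z} | {X = x}). -/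
/-!
Condition `P*(y | do x) = μ_x(y | s*)` on the value of `Z`: by the law of total probability and
the chain rule it is `∑ z, μ_x(y | z, s*) · μ_x(z | s*)`. S-admissibility turns `μ_x(y | z, s*)`
into `μ_x(y | z)` whenever `μ_x(z, s*) > 0` (the other terms vanish), and trivial
transportability turns `μ_x(z | s*)` into `ν(z | x)`.
-/

open MeasureTheory

section ConditionalProbability

variable {Ω : Type*} [MeasurableSpace Ω] (μ : Measure Ω)

-- Valid for every measure: the degenerate cases `μ (B ∩ C) ∈ {0, ⊤}` are absorbed by the
-- conventions `0 / 0 = 0` and `a / ⊤ = 0` in `ℝ≥0∞`.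
theorem pcond_inter_mul_pcond (A B C : Set Ω) :
    pcond μ A (B ∩ C) * pcond μ B C = pcond μ (A ∩ B) C := by
  unfold pcond
  rw [Set.inter_assoc]
  by_cases h0 : μ (B ∩ C) = 0
  · rw [h0, measure_mono_null Set.inter_subset_right h0]
    simp
  by_cases htop : μ (B ∩ C) = ⊤
  · have hC : μ C = ⊤ := top_unique (htop ▸ measure_mono Set.inter_subset_right)
    simp [htop, hC]
  rw [← mul_div_assoc, ENNReal.div_mul_cancel h0 htop]

theorem pcond_eq_sum_pcond_inter_preimage {β : Type*} [Fintype β] [MeasurableSpace β]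
    [MeasurableSingletonClass β] {f : Ω → β} (hf : Measurable f) (A C : Set Ω) :
    pcond μ A C = ∑ b, pcond μ (A ∩ f ⁻¹' {b}) C := by
  have htotal : μ (A ∩ C) = ∑ b, μ (A ∩ f ⁻¹' {b} ∩ C) := by
    have hfib : ∀ b, μ (A ∩ f ⁻¹' {b} ∩ C) = μ.restrict (A ∩ C) (f ⁻¹' {b}) := fun b => by
      rw [Measure.restrict_apply (hf (measurableSet_singleton b))]
      congr 1
      ac_rfl
    simp_rw [hfib, sum_measure_preimage_singleton Finset.univ
      (fun b _ => hf (measurableSet_singleton b))]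
    simp
  simp_rw [pcond, htotal, ENNReal.div_eq_inv_mul, Finset.mul_sum]

theorem pcond_inter_mul_pcond_congr {A B C : Set Ω}
    (h : 0 < μ (B ∩ C) → pcond μ A (B ∩ C) = pcond μ A B) :
    pcond μ A (B ∩ C) * pcond μ B C = pcond μ A B * pcond μ B C := by
  rcases (zero_le : 0 ≤ μ (B ∩ C)).eq_or_lt with h0 | hpos
  · simp [pcond, ← h0]
  · rw [h hpos]

end ConditionalProbability

theorem surrogate_endpoint_transport_formula_general
    {𝒳 𝒴 𝒵 𝒮 : Type*}
    [Fintype 𝒵]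
    [MeasurableSpace 𝒳]
    [MeasurableSpace 𝒴]
    [MeasurableSpace 𝒵] [DiscreteMeasurableSpace 𝒵]
    [MeasurableSpace 𝒮]
    (μ : 𝒳 → Measure (𝒴 × 𝒵 × 𝒮))
    (ν : Measure (𝒳 × 𝒵))
    (s' : 𝒮)
    -- (i) S-admissibility of Z : (Y ⫫ S | Z) under every μ x
    (hadm : ∀ x y z s, 0 < μ x ({p | p.2.1 = z} ∩ {p | p.2.2 = s}) →
      pcond (μ x) {p | p.1 = y} ({p | p.2.1 = z} ∩ {p | p.2.2 = s})
        = pcond (μ x) {p | p.1 = y} {p | p.2.1 = z})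
    -- (ii) trivial transportability of P*(z | do(x)) : P*(z | do(x)) = ν(z | x)
    (htriv : ∀ x z,
      pcond (μ x) {p | p.2.1 = z} {p | p.2.2 = s'}
        = pcond ν {q | q.2 = z} {q | q.1 = x}) :
    ∀ x y,
      pcond (μ x) {p | p.1 = y} {p | p.2.2 = s'}
        = ∑ z : 𝒵, pcond (μ x) {p | p.1 = y} {p | p.2.1 = z}
            * pcond ν {q | q.2 = z} {q | q.1 = x} := by
  intro x y
  have hZ : Measurable fun p : 𝒴 × 𝒵 × 𝒮 => p.2.1 := measurable_fst.comp measurable_snd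
  calc pcond (μ x) {p | p.1 = y} {p | p.2.2 = s'}
      = ∑ z, pcond (μ x) ({p | p.1 = y} ∩ {p | p.2.1 = z}) {p | p.2.2 = s'} :=
        pcond_eq_sum_pcond_inter_preimage (μ x) hZ _ _
    _ = ∑ z, pcond (μ x) {p | p.1 = y} ({p | p.2.1 = z} ∩ {p | p.2.2 = s'})
          * pcond (μ x) {p | p.2.1 = z} {p | p.2.2 = s'} := by
        simp_rw [pcond_inter_mul_pcond]
    _ = ∑ z, pcond (μ x) {p | p.1 = y} {p | p.2.1 = z}
          * pcond (μ x) {p | p.2.1 = z} {p | p.2.2 = s'} :=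
        Finset.sum_congr rfl fun z _ => pcond_inter_mul_pcond_congr _ (hadm x y z s')
    _ = _ := by simp_rw [htriv]

/-- Transport formula for the surrogate-endpoint model of Figure 2(c), eq. (35):
if `Z` is S-admissible and `P*(z | do(x)) = ν(z | x)` (trivial transportability of
the effect of `X` on `Z`), then
`P*(y | do(x)) = ∑ z, P(y | do(x), z) · ν(z | x)`. -/
theorem surrogate_endpoint_transport_formula
    {𝒳 𝒴 𝒵 𝒮 : Type*}
    [Fintype 𝒳] [Fintype 𝒴] [Fintype 𝒵] [Fintype 𝒮]
    [Nonempty 𝒳] [Nonempty 𝒴] [Nonempty 𝒵] [Nonempty 𝒮]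
    [MeasurableSpace 𝒳] [DiscreteMeasurableSpace 𝒳]
    [MeasurableSpace 𝒴] [DiscreteMeasurableSpace 𝒴]
    [MeasurableSpace 𝒵] [DiscreteMeasurableSpace 𝒵]
    [MeasurableSpace 𝒮] [DiscreteMeasurableSpace 𝒮]
    (μ : 𝒳 → Measure (𝒴 × 𝒵 × 𝒮))
    (hprob : ∀ x, IsProbabilityMeasure (μ x))
    (ν : Measure (𝒳 × 𝒵)) (hν : IsProbabilityMeasure ν)
    (s' : 𝒮)
    -- positive probability of all conditioning events appearing in the statement
    (hposS : ∀ x, 0 < μ x {p | p.2.2 = s'})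
    (hposZ : ∀ x (z : 𝒵), 0 < μ x {p | p.2.1 = z})
    (hposX : ∀ x : 𝒳, 0 < ν {q | q.1 = x})
    -- (i) S-admissibility of Z : (Y ⫫ S | Z) under every μ x
    (hadm : ∀ x y z s, 0 < μ x ({p | p.2.1 = z} ∩ {p | p.2.2 = s}) →
      pcond (μ x) {p | p.1 = y} ({p | p.2.1 = z} ∩ {p | p.2.2 = s})
        = pcond (μ x) {p | p.1 = y} {p | p.2.1 = z})
    -- (ii) trivial transportability of P*(z | do(x)) : P*(z | do(x)) = ν(z | x)
    (htriv : ∀ x z,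
      pcond (μ x) {p | p.2.1 = z} {p | p.2.2 = s'}
        = pcond ν {q | q.2 = z} {q | q.1 = x}) :
    ∀ x y,
      pcond (μ x) {p | p.1 = y} {p | p.2.2 = s'}
        = ∑ z : 𝒵, pcond (μ x) {p | p.1 = y} {p | p.2.1 = z}
            * pcond ν {q | q.2 = z} {q | q.1 = x} :=
  surrogate_endpoint_transport_formula_general μ ν s' hadm htriv
end

section
/- Transport formula for the model of Figure 5 (equation for Example 10): Suppose (i) for every x, y, z, s with μ_x({Z = z} ∩ {S = s}) > 0, μ_x({Y = y} | {Z = z} ∩ {S = s}) = μ_x({Y = y} | {Z = z}) (S-admissibility of Z); (ii) there is a probability measure μ on 𝒵 × 𝒲 × 𝒯 × 𝒮 (the source observational distribution augmented with the selection variables) such that μ_x({Z = z} | {W = w} ∩ {S = s}) = μ({Z = z} | {W = w} ∩ {S = s}) for all x, z, w, s; (iii) for every x, w, t, s, μ_x({W = w} | {T = t} ∩ {S = s}) = μ_x({W = w} | {T = t}) (S-admissibility of T for the effect of X on W); and (iv) for every x, t, s, μ_x({T = t} | {S = s}) = μ({T = t} | {S = s}) (T is unaffected by the intervention on X, by Rule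 3 of do-calculus). Then for every x and y, μ_x({Y = y} | {S = s*}) = Σ_{z : 𝒵} μ_x({Y = y} | {Z = z}) · Σ_{w : 𝒲} μ({Z = z} | {W = w} ∩ {S = s*}) · Σ_{t : 𝒯} μ_x({W = w} | {T = t}) · μ({T = t} | {S = s*}). -/
open MeasureTheory

lemma pcond_zero_left {Ω : Type*} [MeasurableSpace Ω] {μ : Measure Ω} {A B : Set Ω}
    (h : μ B = 0) : pcond μ A B = 0 := by
  have : μ (A ∩ B) = 0 := measure_inter_null_of_null_right _ h
  simp [pcond, this]

lemma pcond_total {Ω β : Type*} [MeasurableSpace Ω] [Fintype β] (μ : Measure Ω)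
    [IsFiniteMeasure μ] (A S : Set Ω) (f : Ω → β)
    (hm : ∀ b, MeasurableSet (A ∩ ({ω | f ω = b} ∩ S))) :
    pcond μ A S = ∑ b : β, pcond μ A ({ω | f ω = b} ∩ S) * pcond μ {ω | f ω = b} S := by
  have hdisj : Pairwise (Function.onFun Disjoint fun b => A ∩ ({ω | f ω = b} ∩ S)) := by
    intro i j hij
    simp only [Function.onFun, Set.disjoint_left]
    rintro ω ⟨_, hfi, _⟩ ⟨_, hfj, _⟩
    exact hij (hfi.symm.trans hfj)
  have hcov : A ∩ S = ⋃ b, A ∩ ({ω | f ω = b} ∩ S) := by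
    ext ω
    simp only [Set.mem_inter_iff, Set.mem_iUnion, Set.mem_setOf_eq]
    constructor
    · rintro ⟨hA, hS⟩; exact ⟨f ω, hA, rfl, hS⟩
    · rintro ⟨b, hA, _, hS⟩; exact ⟨hA, hS⟩
  have h1 : μ (A ∩ S) = ∑ b : β, μ (A ∩ ({ω | f ω = b} ∩ S)) := by
    rw [hcov, measure_iUnion hdisj hm, tsum_fintype]
  rw [pcond, h1, div_eq_mul_inv, Finset.sum_mul]
  simp only [← div_eq_mul_inv]
  refine Finset.sum_congr rfl fun b _ => ?_
  by_cases hb : μ ({ω | f ω = b} ∩ S) = 0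
  · have hz : μ (A ∩ ({ω | f ω = b} ∩ S)) = 0 :=
      measure_inter_null_of_null_right _ hb
    simp [pcond, hz, hb, ENNReal.zero_div]
  · have hfin : μ ({ω | f ω = b} ∩ S) ≠ ⊤ := measure_ne_top μ _
    rw [pcond, pcond, ← mul_div_assoc, ENNReal.div_mul_cancel hb hfin]

/-- Transport formula for the model of Figure 5 (Example 10):
`P*(y | do(x)) = ∑ z, P(y | do(x), z) · ∑ w, P*(z | w) · ∑ t, P(w | do(x), t) · P*(t)`. -/
theorem fig5_transport_formula
    {𝒳 𝒴 𝒵 𝒲 𝒯 𝒮 : Type*}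
    [Fintype 𝒳] [Fintype 𝒴] [Fintype 𝒵] [Fintype 𝒲] [Fintype 𝒯] [Fintype 𝒮]
    [Nonempty 𝒳] [Nonempty 𝒴] [Nonempty 𝒵] [Nonempty 𝒲] [Nonempty 𝒯] [Nonempty 𝒮]
    [MeasurableSpace 𝒴] [DiscreteMeasurableSpace 𝒴]
    [MeasurableSpace 𝒵] [DiscreteMeasurableSpace 𝒵]
    [MeasurableSpace 𝒲] [DiscreteMeasurableSpace 𝒲]
    [MeasurableSpace 𝒯] [DiscreteMeasurableSpace 𝒯]
    [MeasurableSpace 𝒮] [DiscreteMeasurableSpace 𝒮]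
    -- post-intervention distributions of (Y, Z, W, T, S) in the source study
    (μx : 𝒳 → Measure (𝒴 × 𝒵 × 𝒲 × 𝒯 × 𝒮))
    (hprobx : ∀ x, IsProbabilityMeasure (μx x))
    -- source observational distribution of (Z, W, T, S)
    (μ : Measure (𝒵 × 𝒲 × 𝒯 × 𝒮)) (hprob : IsProbabilityMeasure μ)
    (s' : 𝒮)
    -- positive probability of all conditioning events appearing in the statement
    (hposSx : ∀ x (s : 𝒮), 0 < μx x {p | p.2.2.2.2 = s})
    (hposZx : ∀ x (z : 𝒵), 0 < μx x {p | p.2.1 = z})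
    (hposWSx : ∀ x w s, 0 < μx x ({p | p.2.2.1 = w} ∩ {p | p.2.2.2.2 = s}))
    (hposWS : ∀ w s, 0 < μ ({q | q.2.1 = w} ∩ {q | q.2.2.2 = s}))
    (hposTSx : ∀ x t s, 0 < μx x ({p | p.2.2.2.1 = t} ∩ {p | p.2.2.2.2 = s}))
    (hposTx : ∀ x (t : 𝒯), 0 < μx x {p | p.2.2.2.1 = t})
    (hposS : ∀ s : 𝒮, 0 < μ {q | q.2.2.2 = s})
    -- (i) S-admissibility of Z : (Y ⫫ S | Z) under every μx x
    (hadm : ∀ x y z s, 0 < μx x ({p | p.2.1 = z} ∩ {p | p.2.2.2.2 = s}) →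
      pcond (μx x) {p | p.1 = y} ({p | p.2.1 = z} ∩ {p | p.2.2.2.2 = s})
        = pcond (μx x) {p | p.1 = y} {p | p.2.1 = z})
    -- (ii) P(z | do(x), w, s) = P(z | w, s)
    (hrule3Z : ∀ x z w s,
      pcond (μx x) {p | p.2.1 = z} ({p | p.2.2.1 = w} ∩ {p | p.2.2.2.2 = s})
        = pcond μ {q | q.1 = z} ({q | q.2.1 = w} ∩ {q | q.2.2.2 = s}))
    -- (iii) S-admissibility of T for the effect of X on W :
    -- P(w | do(x), t, s) = P(w | do(x), t)
    (hadmT : ∀ x w t s,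
      pcond (μx x) {p | p.2.2.1 = w} ({p | p.2.2.2.1 = t} ∩ {p | p.2.2.2.2 = s})
        = pcond (μx x) {p | p.2.2.1 = w} {p | p.2.2.2.1 = t})
    -- (iv) T is unaffected by the intervention on X : P(t | do(x), s) = P(t | s)
    (hrule3T : ∀ x t s,
      pcond (μx x) {p | p.2.2.2.1 = t} {p | p.2.2.2.2 = s}
        = pcond μ {q | q.2.2.1 = t} {q | q.2.2.2 = s}) :
    ∀ x y,
      pcond (μx x) {p | p.1 = y} {p | p.2.2.2.2 = s'}
        = ∑ z : 𝒵, pcond (μx x) {p | p.1 = y} {p | p.2.1 = z}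
            * ∑ w : 𝒲, pcond μ {q | q.1 = z} ({q | q.2.1 = w} ∩ {q | q.2.2.2 = s'})
                * ∑ t : 𝒯, pcond (μx x) {p | p.2.2.1 = w} {p | p.2.2.2.1 = t}
                    * pcond μ {q | q.2.2.1 = t} {q | q.2.2.2 = s'} := by
  intro x y
  have mY : Measurable fun p : 𝒴 × 𝒵 × 𝒲 × 𝒯 × 𝒮 => p.1 := measurable_fst
  have mZ : Measurable fun p : 𝒴 × 𝒵 × 𝒲 × 𝒯 × 𝒮 => p.2.1 := measurable_fst.comp measurable_snd
  have mW : Measurable fun p : 𝒴 × 𝒵 × 𝒲 × 𝒯 × 𝒮 => p.2.2.1 :=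
    measurable_fst.comp (measurable_snd.comp measurable_snd)
  have mT : Measurable fun p : 𝒴 × 𝒵 × 𝒲 × 𝒯 × 𝒮 => p.2.2.2.1 :=
    measurable_fst.comp (measurable_snd.comp (measurable_snd.comp measurable_snd))
  have mS : Measurable fun p : 𝒴 × 𝒵 × 𝒲 × 𝒯 × 𝒮 => p.2.2.2.2 :=
    measurable_snd.comp (measurable_snd.comp (measurable_snd.comp measurable_snd))
  haveI := hprobx x
  have hstep : ∀ z : 𝒵, pcond (μx x) {p | p.2.1 = z} {p | p.2.2.2.2 = s'}
      = ∑ w : 𝒲, pcond μ {q | q.1 = z} ({q | q.2.1 = w} ∩ {q | q.2.2.2 = s'})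
          * ∑ t : 𝒯, pcond (μx x) {p | p.2.2.1 = w} {p | p.2.2.2.1 = t}
              * pcond μ {q | q.2.2.1 = t} {q | q.2.2.2 = s'} := by
    intro z
    rw [pcond_total (μx x) {p | p.2.1 = z} {p | p.2.2.2.2 = s'}
      (fun p => p.2.2.1) (fun b => (mZ (measurableSet_singleton z)).inter
        ((mW (measurableSet_singleton b)).inter (mS (measurableSet_singleton s'))))]
    refine Finset.sum_congr rfl fun w _ => ?_
    rw [hrule3Z x z w s']
    congr 1
    rw [pcond_total (μx x) {p | p.2.2.1 = w} {p | p.2.2.2.2 = s'}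
      (fun p => p.2.2.2.1) (fun b => (mW (measurableSet_singleton w)).inter
        ((mT (measurableSet_singleton b)).inter (mS (measurableSet_singleton s'))))]
    refine Finset.sum_congr rfl fun t _ => ?_
    rw [hadmT x w t s', hrule3T x t s']
  rw [pcond_total (μx x) {p | p.1 = y} {p | p.2.2.2.2 = s'}
    (fun p => p.2.1) (fun b => (mY (measurableSet_singleton y)).inter
      ((mZ (measurableSet_singleton b)).inter (mS (measurableSet_singleton s'))))]
  refine Finset.sum_congr rfl fun z _ => ?_
  rw [← hstep z]
  by_cases hz : μx x ({p | p.2.1 = z} ∩ {p | p.2.2.2.2 = s'}) = 0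
  · have e1 : pcond (μx x) {p | p.1 = y} ({p | p.2.1 = z} ∩ {p | p.2.2.2.2 = s'}) = 0 :=
      pcond_zero_left hz
    have e2 : pcond (μx x) {p | p.2.1 = z} {p | p.2.2.2.2 = s'} = 0 := by
      simp [pcond, hz]
    rw [e1, e2, zero_mul, mul_zero]
  · rw [hadm x y z s' (pos_iff_ne_zero.mpr hz)]
end
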